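/- Let (V, ν, τ, τ*) be a strongly complete PN space (a PNB space) with τ, τ* sup-continuous, and W a closed subspace. Then the quotient PN space (V/W, ν̄, τ, τ*) is strongly complete. -/

import Mathlib

open Filter Topology Set

/-- A distribution function in `Δ⁺`: nondecreasing, left-continuous,
vanishing on `(-∞,0]` and bounded by `1`. -/
structure DistFun where
  toFun : ℝ → ℝ
  mono' : Monotone toFun
  leftCont' : ∀ x, Filter.Tendsto toFun (nhdsWithin x (Set.Iio x)) (nhds (toFun x))
  zero' : ∀ x ≤ (0 : ℝ), toFun x = 0
  le_one' : ∀ x, toFun x ≤ 1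

instance : CoeFun DistFun (fun _ => ℝ → ℝ) := ⟨DistFun.toFun⟩

/-- Pointwise order on `Δ⁺`. -/
instance : LE DistFun := ⟨fun F G => ∀ x, F.toFun x ≤ G.toFun x⟩

/-- The unit step distribution function `ε_a` for `a ≥ 0`. -/
noncomputable def unitStep (a : ℝ) (_ha : 0 ≤ a) : DistFun where
  toFun x := if x ≤ a then 0 else 1
  mono' := by
    intro x y hxy
    by_cases hx : x ≤ a <;> by_cases hy : y ≤ a <;> simp [hx, hy] <;> linarith
  leftCont' := by
    intro x
    by_cases hx : x ≤ a
    · have h : (fun y => if y ≤ a then (0:ℝ) else 1) =ᶠ[nhdsWithin x (Set.Iio x)]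
          fun _ => (0:ℝ) := by
        filter_upwards [self_mem_nhdsWithin] with y hy
        exact if_pos ((le_of_lt hy).trans hx)
      simpa [if_pos hx] using (tendsto_const_nhds (α := ℝ)).congr' h.symm
    · have hax : a < x := not_le.mp hx
      have h : (fun y => if y ≤ a then (0:ℝ) else 1) =ᶠ[nhdsWithin x (Set.Iio x)]
          fun _ => (1:ℝ) := by
        filter_upwards [(eventually_gt_nhds hax).filter_mono nhdsWithin_le_nhds] with y hy
        exact if_neg (not_le.mpr hy)
      simpa [if_neg hx] using (tendsto_const_nhds (α := ℝ)).congr' h.symm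
  zero' := fun x hx => if_pos (hx.trans _ha)
  le_one' := by intro x; by_cases h : x ≤ a <;> simp [h]

/-- The maximal element `ε₀` of `Δ⁺`. -/
noncomputable def eps0 : DistFun := unitStep 0 le_rfl

/-- The one-sided Lévy condition `(F,G;h)`. -/
def levyCond (F G : DistFun) (h : ℝ) : Prop :=
  ∀ x : ℝ, -(1/h) < x → x < 1/h →
    F.toFun (x - h) - h ≤ G.toFun x ∧ G.toFun x ≤ F.toFun (x + h) + h

/-- The Sibley (modified Lévy) metric on `Δ⁺`. -/
noncomputable def sibley (F G : DistFun) : ℝ :=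
  sInf {h : ℝ | 0 < h ∧ h ≤ 1 ∧ levyCond F G h ∧ levyCond G F h}

/-- Triangle function: associative, commutative, nondecreasing binary
operation on `Δ⁺` with identity `ε₀`. -/
structure IsTriangleFun (τ : DistFun → DistFun → DistFun) : Prop where
  comm : ∀ F G, τ F G = τ G F
  assoc : ∀ F G H, τ (τ F G) H = τ F (τ G H)
  mono : ∀ F G H, F ≤ G → τ F H ≤ τ G H
  ident : ∀ F, τ F eps0 = F

/-- Continuity of a triangle function w.r.t. the Sibley metric (sequential form). -/
def TriCont (τ : DistFun → DistFun → DistFun) : Prop :=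
  ∀ (F G : ℕ → DistFun) (F₀ G₀ : DistFun),
    Filter.Tendsto (fun n => sibley (F n) F₀) Filter.atTop (nhds 0) →
    Filter.Tendsto (fun n => sibley (G n) G₀) Filter.atTop (nhds 0) →
    Filter.Tendsto (fun n => sibley (τ (F n) (G n)) (τ F₀ G₀)) Filter.atTop (nhds 0)

/-- Sup-continuity of a triangle function: `τ (sup_i F_i) G = sup_i τ (F_i) G`
(pointwise). -/
def SupCont (τ : DistFun → DistFun → DistFun) : Prop :=
  ∀ {ι : Type} [Nonempty ι] (F : ι → DistFun) (S G : DistFun),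
    (∀ x, S.toFun x = ⨆ i, (F i).toFun x) →
    ∀ x, (τ S G).toFun x = ⨆ i, (τ (F i) G).toFun x

/-- Domination `τ₁ ≫ τ₂` of triangle functions. -/
def Dominates (τ₁ τ₂ : DistFun → DistFun → DistFun) : Prop :=
  ∀ F₁ F₂ G₁ G₂, τ₂ (τ₁ F₁ F₂) (τ₁ G₁ G₂) ≤ τ₁ (τ₂ F₁ G₁) (τ₂ F₂ G₂)

/-- A probabilistic pseudo-normed space `(V, ν, τ, τ*)`. -/
structure IsPPNSpace {V : Type*} [AddCommGroup V] [Module ℝ V]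
    (ν : V → DistFun) (τ τs : DistFun → DistFun → DistFun) : Prop where
  tri : IsTriangleFun τ
  tri_s : IsTriangleFun τs
  cont : TriCont τ
  cont_s : TriCont τs
  tau_le : ∀ F G, τ F G ≤ τs F G
  N1' : ν 0 = eps0
  N2 : ∀ p, ν (-p) = ν p
  N3 : ∀ p q, τ (ν p) (ν q) ≤ ν (p + q)
  N4 : ∀ (p : V) (α : ℝ), 0 ≤ α → α ≤ 1 →
    ν p ≤ τs (ν (α • p)) (ν ((1 - α) • p))

/-- A probabilistic normed space `(V, ν, τ, τ*)`. -/
structure IsPNSpace {V : Type*} [AddCommGroup V] [Module ℝ V]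
    (ν : V → DistFun) (τ τs : DistFun → DistFun → DistFun)
    extends IsPPNSpace ν τ τs : Prop where
  N1 : ∀ p, ν p = eps0 ↔ p = 0

/-- The strong topology of a PN space, generated by the strong neighbourhoods
`N_p(t) = {q : ν_{q-p}(t) > 1 - t}`. -/
def strongTop {V : Type*} [AddCommGroup V] (ν : V → DistFun) : TopologicalSpace V :=
  TopologicalSpace.generateFrom
    {S | ∃ (p : V) (t : ℝ), 0 < t ∧ S = {q | 1 - t < (ν (q - p)).toFun t}}

/-- A set is closed in the strong topology. -/
def StrongClosed {V : Type*} [AddCommGroup V] (ν : V → DistFun) (S : Set V) : Prop :=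
  @IsClosed V (strongTop ν) S

/-- A strong Cauchy sequence. -/
def StrongCauchy {V : Type*} [AddCommGroup V] (ν : V → DistFun) (p : ℕ → V) : Prop :=
  ∀ t : ℝ, 0 < t → ∃ N : ℕ, ∀ m n, N ≤ m → N ≤ n → 1 - t < (ν (p n - p m)).toFun t

/-- Strong convergence of a sequence to a point. -/
def StrongConv {V : Type*} [AddCommGroup V] (ν : V → DistFun) (p : ℕ → V) (x : V) : Prop :=
  ∀ t : ℝ, 0 < t → ∃ N : ℕ, ∀ n, N ≤ n → 1 - t < (ν (p n - x)).toFun t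

/-- Strong completeness. -/
def StrongComplete {V : Type*} [AddCommGroup V] (ν : V → DistFun) : Prop :=
  ∀ p : ℕ → V, StrongCauchy ν p → ∃ x, StrongConv ν p x

/-!
The axioms of a PN space pass to `ν̄` coset by coset: `N3` because sup-continuity lets `τ`
commute with the supremum over a coset, `N4` by monotonicity of `τ*`, and `N1` because `W` is
strongly closed: if `ν̄_{p+W} = ε₀`, every strong neighbourhood of `p` meets `W`, so `p ∈ W`.

For completeness, continuity of `τ` at `(ε₀, ε₀)` gives radii `s k → 0` such that two
increments near at radius `s (k + 1)` add up to one near at radius `s k`. A Cauchy sequence in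
`V/W` has a subsequence whose consecutive differences are near at `s (k + 1)`; since `ν̄` is a
supremum over the coset, it lifts step by step to a sequence in `V` with the same property. That
sequence is Cauchy, so it converges in `V`, and the coset of its limit is the limit of the
subsequence, hence of the whole Cauchy sequence.
-/

namespace DistFun

theorem ext' {F G : DistFun} (h : ∀ x, F.toFun x = G.toFun x) : F = G := by
  cases F; cases G
  congr
  exact funext h

theorem nonneg (F : DistFun) (x : ℝ) : 0 ≤ F.toFun x := by
  rcases le_or_gt x 0 with hx | hx
  · rw [F.zero' x hx]
  · rw [← F.zero' 0 le_rfl]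
    exact F.mono' hx.le

/-- In a PN space, `(ν (q - p)).IsNear t` says `q ∈ N_p(t)`. -/
def IsNear (F : DistFun) (t : ℝ) : Prop := 1 - t < F.toFun t

theorem IsNear.mono {F : DistFun} {s t : ℝ} (hF : F.IsNear s) (hst : s ≤ t) : F.IsNear t := by
  unfold IsNear at *
  linarith [F.mono' hst]

theorem IsNear.of_le {F G : DistFun} {t : ℝ} (hF : F.IsNear t) (hFG : F ≤ G) : G.IsNear t :=
  hF.trans_le (hFG t)

end DistFun

open DistFun

theorem eps0_apply_of_pos {t : ℝ} (ht : 0 < t) : eps0.toFun t = 1 := by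
  simp [eps0, unitStep, not_le.mpr ht]

theorem eps0_isNear {t : ℝ} (ht : 0 < t) : eps0.IsNear t := by
  unfold IsNear
  rw [eps0_apply_of_pos ht]
  linarith

theorem IsTriangleFun.eps0_left {τ : DistFun → DistFun → DistFun} (hτ : IsTriangleFun τ)
    (F : DistFun) : τ eps0 F = F := by
  rw [hτ.comm, hτ.ident]

theorem IsTriangleFun.mono₂ {τ : DistFun → DistFun → DistFun} (hτ : IsTriangleFun τ)
    {F F' G G' : DistFun} (hF : F ≤ F') (hG : G ≤ G') : τ F G ≤ τ F' G' := fun x =>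
  calc (τ F G).toFun x ≤ (τ F' G).toFun x := hτ.mono F F' G hF x
    _ = (τ G F').toFun x := by rw [hτ.comm]
    _ ≤ (τ G' F').toFun x := hτ.mono G G' F' hG x
    _ = (τ F' G').toFun x := by rw [hτ.comm]

/-- `SupCont` quantifies over index types in `Type`; any index type reduces to `Set.range F`. -/
theorem SupCont.apply_of_eq_iSup {τ : DistFun → DistFun → DistFun} (hτ : SupCont τ)
    {ι : Type*} [Nonempty ι] (F : ι → DistFun) (S G : DistFun)
    (hS : ∀ x, S.toFun x = ⨆ i, (F i).toFun x) (x : ℝ) :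
    (τ S G).toFun x = ⨆ i, (τ (F i) G).toFun x := by
  have iSup_range_eq : ∀ g : DistFun → ℝ, (⨆ D : Set.range F, g D) = ⨆ i, g (F i) := by
    intro g
    simp only [iSup]
    congr 1
    ext y
    simp
  have := hτ (fun D : Set.range F => (D : DistFun)) S G
    (fun y => by rw [hS y, iSup_range_eq fun D => D.toFun y]) x
  rwa [iSup_range_eq fun D => (τ D G).toFun x] at this

theorem one_mem_sibleySet (F G : DistFun) :
    (1 : ℝ) ∈ {h : ℝ | 0 < h ∧ h ≤ 1 ∧ levyCond F G h ∧ levyCond G F h} := by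
  refine ⟨one_pos, le_rfl, ?_, ?_⟩ <;>
  · intro x _ _
    exact ⟨by linarith [F.le_one' (x - 1), G.nonneg x, G.le_one' (x - 1), F.nonneg x],
      by linarith [F.le_one' x, G.le_one' x, F.nonneg (x + 1), G.nonneg (x + 1)]⟩

theorem sibley_nonneg (F G : DistFun) : 0 ≤ sibley F G :=
  le_csInf ⟨1, one_mem_sibleySet F G⟩ fun _ hh => hh.1.le

theorem levyCond_self (F : DistFun) {h : ℝ} (hh : 0 < h) : levyCond F F h := fun x _ _ =>
  ⟨by linarith [F.mono' (by linarith : x - h ≤ x)], by linarith [F.mono' (by linarith : x ≤ x + h)]⟩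

theorem sibley_self (F : DistFun) : sibley F F = 0 := by
  refine le_antisymm ?_ (sibley_nonneg F F)
  calc sibley F F ≤ sInf (Set.Ioc (0 : ℝ) 1) :=
        csInf_le_csInf ⟨0, fun _ hh => hh.1.le⟩ ⟨1, by norm_num⟩
          fun h hh => ⟨hh.1, hh.2, levyCond_self F hh.1, levyCond_self F hh.1⟩
    _ = 0 := csInf_Ioc one_pos

theorem sibley_eps0_le {F : DistFun} {s : ℝ} (hs : 0 < s) (hs1 : s ≤ 1) (hF : F.IsNear s) :
    sibley F eps0 ≤ s := by
  refine csInf_le ⟨0, fun _ hh => hh.1.le⟩ ⟨hs, hs1, fun x _ _ => ⟨?_, ?_⟩, fun x _ _ => ⟨?_, ?_⟩⟩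
  · rcases le_or_gt x 0 with hx | hx
    · rw [eps0.zero' x hx, F.zero' _ (by linarith)]
      linarith
    · rw [eps0_apply_of_pos hx]
      linarith [F.le_one' (x - s)]
  · rcases le_or_gt x 0 with hx | hx
    · rw [eps0.zero' x hx]
      linarith [F.nonneg (x + s)]
    · linarith [eps0.le_one' x, F.mono' (by linarith : s ≤ x + s), hF.le]
  · rcases le_or_gt (x - s) 0 with hx | hx
    · rw [eps0.zero' _ hx]
      linarith [F.nonneg x]
    · rw [eps0_apply_of_pos hx]
      linarith [F.mono' (by linarith : s ≤ x), hF.le]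
  · rcases le_or_gt (x + s) 0 with hx | hx
    · rw [eps0.zero' _ hx, F.zero' x (by linarith)]
      linarith
    · rw [eps0_apply_of_pos hx]
      linarith [F.le_one' x]

/-- By left-continuity `F` is already near at some `t' < t`, which survives a Lévy perturbation
of size `< t - t'`. -/
theorem eventually_isNear_of_tendsto_sibley {H : ℕ → DistFun} {F : DistFun}
    (hconv : Tendsto (fun n => sibley (H n) F) atTop (𝓝 0))
    {t : ℝ} (ht : 0 < t) (hF : F.IsNear t) : ∀ᶠ n in atTop, (H n).IsNear t := by
  obtain ⟨t', ht'F, ht't⟩ : ∃ t', 1 - t < F.toFun t' ∧ t' < t :=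
    (((F.leftCont' t).eventually (eventually_gt_nhds hF)).and self_mem_nhdsWithin).exists
  set δ : ℝ := min (t - t') (min (F.toFun t' - (1 - t)) (1 / (t + 1)))
  have hδpos : 0 < δ := lt_min (by linarith) (lt_min (by linarith) (by positivity))
  filter_upwards [hconv.eventually_lt_const hδpos] with n hn
  obtain ⟨h, ⟨hh0, -, -, hlevy⟩, hhδ⟩ := exists_lt_of_csInf_lt ⟨1, one_mem_sibleySet _ _⟩ hn
  have hδ1 : δ ≤ 1 / (t + 1) := (min_le_right _ _).trans (min_le_right _ _)
  have hδ2 : δ ≤ t - t' := min_le_left _ _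
  have hδ3 : δ ≤ F.toFun t' - (1 - t) := (min_le_right _ _).trans (min_le_left _ _)
  have ht_lt : t < 1 / h := by
    rw [lt_div_iff₀ hh0]
    have : h * (t + 1) < 1 :=
      calc h * (t + 1) < δ * (t + 1) := by nlinarith
        _ ≤ 1 / (t + 1) * (t + 1) := by gcongr
        _ = 1 := by field_simp
    nlinarith
  have hlow := (hlevy t (by nlinarith [one_div_pos.mpr hh0]) ht_lt).1
  have hmono : F.toFun t' ≤ F.toFun (t - h) := F.mono' (by linarith)
  show 1 - t < (H n).toFun t
  linarith

theorem TriCont.exists_isNear_of_sibley_lt {τ : DistFun → DistFun → DistFun} (hτ : TriCont τ)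
    {F₀ G₀ : DistFun} {t : ℝ} (ht : 0 < t) (hnear : (τ F₀ G₀).IsNear t) :
    ∃ δ > 0, ∀ F G, sibley F F₀ < δ → sibley G G₀ < δ → (τ F G).IsNear t := by
  by_contra! hcon
  choose F G hF hG hnot using fun n : ℕ => hcon (1 / (n + 1)) Nat.one_div_pos_of_nat
  have hsq : ∀ {H : ℕ → DistFun} {H₀ : DistFun}, (∀ n, sibley (H n) H₀ < 1 / (n + 1)) →
      Tendsto (fun n => sibley (H n) H₀) atTop (𝓝 0) := fun hH =>
    squeeze_zero (fun _ => sibley_nonneg _ _) (fun n => (hH n).le)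
      tendsto_one_div_add_atTop_nhds_zero_nat
  obtain ⟨n, hn⟩ :=
    (eventually_isNear_of_tendsto_sibley (hτ F G F₀ G₀ (hsq hF) (hsq hG)) ht hnear).exists
  exact hnot n hn

theorem exists_pos_sibley_eps0_lt {δ : ℝ} (hδ : 0 < δ) :
    ∃ s > 0, ∀ F : DistFun, F.IsNear s → sibley F eps0 < δ := by
  have hs : 0 < min 1 (δ / 2) := lt_min one_pos (half_pos hδ)
  refine ⟨min 1 (δ / 2), hs, fun F hF => (sibley_eps0_le hs (min_le_left _ _) hF).trans_lt ?_⟩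
  linarith [min_le_right 1 (δ / 2)]

theorem TriCont.exists_isNear_tau {τ : DistFun → DistFun → DistFun} (hcont : TriCont τ)
    (htri : IsTriangleFun τ) {t : ℝ} (ht : 0 < t) :
    ∃ s > 0, ∀ F G : DistFun, F.IsNear s → G.IsNear s → (τ F G).IsNear t := by
  obtain ⟨δ, hδ, hclose⟩ :=
    hcont.exists_isNear_of_sibley_lt (F₀ := eps0) (G₀ := eps0) ht
      (by rw [htri.ident]; exact eps0_isNear ht)
  obtain ⟨s, hs, hsδ⟩ := exists_pos_sibley_eps0_lt hδ
  exact ⟨s, hs, fun F G hF hG => hclose F G (hsδ F hF) (hsδ G hG)⟩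

/-- These radii play the role of `2⁻ᵏ` in the metric proof that a sequence with summable
increments is Cauchy. -/
structure IsTauScale (τ : DistFun → DistFun → DistFun) (s : ℕ → ℝ) : Prop where
  pos : ∀ k, 0 < s k
  tendsto_zero : Tendsto s atTop (𝓝 0)
  isNear_tau : ∀ k F G, F.IsNear (s (k + 1)) → G.IsNear (s (k + 1)) → (τ F G).IsNear (s k)

theorem TriCont.exists_isTauScale {τ : DistFun → DistFun → DistFun} (hcont : TriCont τ)
    (htri : IsTriangleFun τ) : ∃ s, IsTauScale τ s := by
  choose! c hc_pos hc using fun t (ht : 0 < t) => hcont.exists_isNear_tau htri ht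
  let s : ℕ → ℝ := fun n => Nat.rec 1 (fun k sk => min (c sk) (1 / (k + 1))) n
  have hs_succ : ∀ k, s (k + 1) = min (c (s k)) (1 / (k + 1)) := fun _ => rfl
  have hs_pos : ∀ k, 0 < s k := by
    intro k
    induction k with
    | zero => exact one_pos
    | succ k ih => rw [hs_succ]; exact lt_min (hc_pos _ ih) (by positivity)
  refine ⟨s, hs_pos, ?_, fun k F G hF hG => hc _ (hs_pos k) F G ?_ ?_⟩
  · rw [← tendsto_add_atTop_iff_nat 1]
    refine squeeze_zero (fun k => (hs_pos (k + 1)).le) (fun k => ?_)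
      tendsto_one_div_add_atTop_nhds_zero_nat
    rw [hs_succ]
    exact min_le_right _ _
  · exact hF.mono (hs_succ k ▸ min_le_left _ _)
  · exact hG.mono (hs_succ k ▸ min_le_left _ _)

theorem StrongCauchy.exists_strictMono_isNear {V : Type*} [AddCommGroup V] {ν : V → DistFun}
    {p : ℕ → V} (hp : StrongCauchy ν p) {ε : ℕ → ℝ} (hε : ∀ k, 0 < ε k) :
    ∃ φ : ℕ → ℕ, StrictMono φ ∧ ∀ k, (ν (p (φ (k + 1)) - p (φ k))).IsNear (ε k) := by
  obtain ⟨φ, hφ, hnear⟩ := extraction_forall_of_eventually'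
    (P := fun k N => ∀ m n, N ≤ m → N ≤ n → (ν (p n - p m)).IsNear (ε k))
    fun k => (hp (ε k) (hε k)).imp fun N hN M hM m n hm hn => hN m n (hM.trans hm) (hM.trans hn)
  exact ⟨φ, hφ, fun k => hnear k _ _ le_rfl (hφ k.lt_succ_self).le⟩

namespace IsPPNSpace

variable {V : Type*} [AddCommGroup V] [Module ℝ V] {ν : V → DistFun}
  {τ τs : DistFun → DistFun → DistFun}

theorem exists_isNear_subset_of_isNear (h : IsPPNSpace ν τ τs) {p₀ p : V} {t₀ : ℝ}
    (ht₀ : 0 < t₀) (hp : (ν (p - p₀)).IsNear t₀) :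
    ∃ t > 0, ∀ q, (ν (q - p)).IsNear t → (ν (q - p₀)).IsNear t₀ := by
  obtain ⟨δ, hδ, hclose⟩ := h.cont.exists_isNear_of_sibley_lt (F₀ := eps0) (G₀ := ν (p - p₀))
    ht₀ (by rwa [h.tri.eps0_left])
  obtain ⟨t, ht, htδ⟩ := exists_pos_sibley_eps0_lt hδ
  refine ⟨t, ht, fun q hq => ?_⟩
  have hsum := (hclose _ _ (htδ _ hq) (by rwa [sibley_self])).of_le (h.N3 (q - p) (p - p₀))
  rwa [sub_add_sub_cancel] at hsum

theorem exists_isNear_subset_of_isOpen (h : IsPPNSpace ν τ τs) {U : Set V}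
    (hU : IsOpen[strongTop ν] U) {p : V} (hp : p ∈ U) :
    ∃ t > 0, ∀ q, (ν (q - p)).IsNear t → q ∈ U := by
  induction hU generalizing p with
  | basic S hS =>
    obtain ⟨p₀, t₀, ht₀, rfl⟩ := hS
    exact h.exists_isNear_subset_of_isNear ht₀ hp
  | univ => exact ⟨1, one_pos, fun _ _ => trivial⟩
  | inter S T _ _ ihS ihT =>
    obtain ⟨t₁, ht₁, hS⟩ := ihS hp.1
    obtain ⟨t₂, ht₂, hT⟩ := ihT hp.2
    exact ⟨min t₁ t₂, lt_min ht₁ ht₂, fun q hq =>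
      ⟨hS q (hq.mono (min_le_left _ _)), hT q (hq.mono (min_le_right _ _))⟩⟩
  | sUnion S _ ih =>
    obtain ⟨U, hUS, hpU⟩ := hp
    obtain ⟨t, ht, hU⟩ := ih U hUS hpU
    exact ⟨t, ht, fun q hq => ⟨U, hUS, hU q hq⟩⟩

theorem isNear_sub_of_isTauScale (h : IsPPNSpace ν τ τs) {s : ℕ → ℝ} (hs : IsTauScale τ s)
    {q : ℕ → V} (hq : ∀ k, (ν (q (k + 1) - q k)).IsNear (s (k + 1))) (d k : ℕ) :
    (ν (q (k + d) - q k)).IsNear (s k) := by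
  induction d generalizing k with
  | zero => simpa [h.N1'] using eps0_isNear (hs.pos k)
  | succ d ih =>
    have hsum := (hs.isNear_tau k _ _ (hq k) (ih (k + 1))).of_le (h.N3 _ _)
    rwa [sub_add_sub_cancel', add_right_comm] at hsum

theorem strongCauchy_of_isTauScale (h : IsPPNSpace ν τ τs) {s : ℕ → ℝ} (hs : IsTauScale τ s)
    {q : ℕ → V} (hq : ∀ k, (ν (q (k + 1) - q k)).IsNear (s (k + 1))) : StrongCauchy ν q := by
  intro t ht
  obtain ⟨N, hN⟩ := eventually_atTop.mp (hs.tendsto_zero.eventually_le_const ht)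
  have forward : ∀ m n, N ≤ m → m ≤ n → (ν (q n - q m)).IsNear t := by
    intro m n hm hmn
    obtain ⟨d, rfl⟩ := Nat.exists_eq_add_of_le hmn
    exact (h.isNear_sub_of_isTauScale hs hq d m).mono (hN m hm)
  refine ⟨N, fun m n hm hn => ?_⟩
  rcases le_total m n with hmn | hnm
  · exact forward m n hm hmn
  · show (ν (q n - q m)).IsNear t
    rw [← neg_sub, h.N2]
    exact forward n m hn hnm

theorem strongConv_of_strongCauchy_of_comp (h : IsPPNSpace ν τ τs) {p : ℕ → V}
    (hp : StrongCauchy ν p) {φ : ℕ → ℕ} (hφ : StrictMono φ) {x : V}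
    (hx : StrongConv ν (p ∘ φ) x) : StrongConv ν p x := by
  intro t ht
  obtain ⟨s, hs, hτ⟩ := h.cont.exists_isNear_tau h.tri ht
  obtain ⟨N₁, hN₁⟩ := hp s hs
  obtain ⟨N₂, hN₂⟩ := hx s hs
  set k := max N₁ N₂
  refine ⟨N₁, fun n hn => ?_⟩
  have hsum := (hτ _ _ (hN₁ (φ k) n ((le_max_left _ _).trans (hφ.id_le k)) hn)
    (hN₂ k (le_max_right _ _))).of_le (h.N3 _ _)
  rwa [Function.comp_apply, sub_add_sub_cancel] at hsum

end IsPPNSpace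

/-- `ν'` is the quotient probabilistic norm `ν̄`. -/
def IsQuotientPNorm {V : Type*} [AddCommGroup V] [Module ℝ V] (ν : V → DistFun)
    (W : Submodule ℝ V) (ν' : V ⧸ W → DistFun) : Prop :=
  ∀ (p : V) (x : ℝ), (ν' (W.mkQ p)).toFun x = ⨆ q : W, (ν (p + (q : V))).toFun x

namespace IsQuotientPNorm

variable {V : Type*} [AddCommGroup V] [Module ℝ V] {ν : V → DistFun} {W : Submodule ℝ V}
  {ν' : V ⧸ W → DistFun} {τ τs : DistFun → DistFun → DistFun}

theorem le_mkQ_of_mem (hν' : IsQuotientPNorm ν W ν') (p : V) {w : V} (hw : w ∈ W) :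
    ν (p + w) ≤ ν' (W.mkQ p) := fun x => by
  rw [hν']
  exact le_ciSup (f := fun q : W => (ν (p + q)).toFun x)
    ⟨1, by rintro _ ⟨q, rfl⟩; exact (ν _).le_one' x⟩ ⟨w, hw⟩

theorem le_mkQ (hν' : IsQuotientPNorm ν W ν') (p : V) : ν p ≤ ν' (W.mkQ p) := by
  simpa using hν'.le_mkQ_of_mem p W.zero_mem

theorem apply_mkQ_le (hν' : IsQuotientPNorm ν W ν') {p : V} {x B : ℝ}
    (hB : ∀ w ∈ W, (ν (p + w)).toFun x ≤ B) : (ν' (W.mkQ p)).toFun x ≤ B := by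
  rw [hν']
  exact ciSup_le fun q => hB q q.2

theorem exists_isNear (hν' : IsQuotientPNorm ν W ν') {p : V} {t : ℝ}
    (hp : (ν' (W.mkQ p)).IsNear t) : ∃ w ∈ W, (ν (p + w)).IsNear t := by
  unfold IsNear at hp
  rw [hν'] at hp
  obtain ⟨q, hq⟩ := exists_lt_of_lt_ciSup hp
  exact ⟨q, q.2, hq⟩

theorem map_zero (hν' : IsQuotientPNorm ν W ν') (h0 : ν 0 = eps0) : ν' 0 = eps0 := by
  refine ext' fun x => ?_
  rcases le_or_gt x 0 with hx | hx
  · rw [(ν' 0).zero' x hx, eps0.zero' x hx]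
  · refine le_antisymm (eps0_apply_of_pos hx ▸ (ν' 0).le_one' x) ?_
    calc eps0.toFun x = (ν 0).toFun x := by rw [h0]
      _ ≤ (ν' (W.mkQ 0)).toFun x := hν'.le_mkQ 0 x
      _ = (ν' 0).toFun x := by rw [LinearMap.map_zero]

theorem map_neg (hν' : IsQuotientPNorm ν W ν') (hN2 : ∀ p, ν (-p) = ν p) (z : V ⧸ W) :
    ν' (-z) = ν' z := by
  have neg_le : ∀ p x, (ν' (W.mkQ (-p))).toFun x ≤ (ν' (W.mkQ p)).toFun x := by
    refine fun p x => hν'.apply_mkQ_le fun w hw => ?_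
    rw [← hN2, neg_add, neg_neg]
    exact hν'.le_mkQ_of_mem p (W.neg_mem hw) x
  obtain ⟨p, rfl⟩ := W.mkQ_surjective z
  refine ext' fun x => le_antisymm ?_ ?_
  · rw [← LinearMap.map_neg]
    exact neg_le p x
  · simpa using neg_le (-p) x

theorem tau_le_map_add (hν' : IsQuotientPNorm ν W ν') (htri : IsTriangleFun τ)
    (hτ : SupCont τ) (hN3 : ∀ p q, τ (ν p) (ν q) ≤ ν (p + q)) (a b : V ⧸ W) :
    τ (ν' a) (ν' b) ≤ ν' (a + b) := by
  obtain ⟨p, rfl⟩ := W.mkQ_surjective a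
  obtain ⟨r, rfl⟩ := W.mkQ_surjective b
  have tau_mkQ : ∀ (r : V) (G : DistFun) (x : ℝ),
      (τ (ν' (W.mkQ r)) G).toFun x = ⨆ w : W, (τ (ν (r + w)) G).toFun x :=
    fun r G => hτ.apply_of_eq_iSup _ _ _ (hν' r)
  intro x
  rw [tau_mkQ]
  refine ciSup_le fun q => ?_
  rw [htri.comm, tau_mkQ]
  refine ciSup_le fun w => ?_
  calc (τ (ν (r + w)) (ν (p + q))).toFun x ≤ (ν ((p + r) + (q + w : W))).toFun x := by
        rw [show (p + r) + ((q + w : W) : V) = (r + w) + (p + q) by push_cast; abel]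
        exact hN3 _ _ x
    _ ≤ (ν' (W.mkQ p + W.mkQ r)).toFun x := by
        rw [← LinearMap.map_add]
        exact hν'.le_mkQ_of_mem _ (q + w).2 x

theorem le_tau_map_smul (hν' : IsQuotientPNorm ν W ν') (htri_s : IsTriangleFun τs)
    (hN4 : ∀ (p : V) (α : ℝ), 0 ≤ α → α ≤ 1 → ν p ≤ τs (ν (α • p)) (ν ((1 - α) • p)))
    (z : V ⧸ W) (α : ℝ) (hα0 : 0 ≤ α) (hα1 : α ≤ 1) :
    ν' z ≤ τs (ν' (α • z)) (ν' ((1 - α) • z)) := by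
  obtain ⟨p, rfl⟩ := W.mkQ_surjective z
  have smul_le : ∀ (β : ℝ) {w : V}, w ∈ W → ν (β • (p + w)) ≤ ν' (β • W.mkQ p) := by
    intro β w hw
    rw [smul_add, ← LinearMap.map_smul]
    exact hν'.le_mkQ_of_mem _ (W.smul_mem β hw)
  exact fun x => hν'.apply_mkQ_le fun w hw =>
    (hN4 _ α hα0 hα1 x).trans (htri_s.mono₂ (smul_le α hw) (smul_le (1 - α) hw) x)

theorem eq_zero_of_eq_eps0 (hν' : IsQuotientPNorm ν W ν') (h : IsPPNSpace ν τ τs)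
    (hW : StrongClosed ν (W : Set V)) {z : V ⧸ W} (hz : ν' z = eps0) : z = 0 := by
  obtain ⟨p, rfl⟩ := W.mkQ_surjective z
  rw [Submodule.mkQ_apply, Submodule.Quotient.mk_eq_zero]
  by_contra hp
  obtain ⟨t, ht, hball⟩ := h.exists_isNear_subset_of_isOpen hW.isOpen_compl hp
  obtain ⟨w, hw, hnear⟩ := hν'.exists_isNear (hz ▸ eps0_isNear ht)
  refine hball (-w) ?_ (W.neg_mem hw)
  rwa [show -w - p = -(p + w) by abel, h.N2]

theorem isPNSpace (hν' : IsQuotientPNorm ν W ν') (h : IsPPNSpace ν τ τs) (hτ : SupCont τ)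
    (hW : StrongClosed ν (W : Set V)) : IsPNSpace ν' τ τs where
  toIsPPNSpace :=
    ⟨h.tri, h.tri_s, h.cont, h.cont_s, h.tau_le, hν'.map_zero h.N1', hν'.map_neg h.N2,
      hν'.tau_le_map_add h.tri hτ h.N3, hν'.le_tau_map_smul h.tri_s h.N4⟩
  N1 _ := ⟨hν'.eq_zero_of_eq_eps0 h hW, fun hz => hz ▸ hν'.map_zero h.N1'⟩

theorem exists_lift_isNear (hν' : IsQuotientPNorm ν W ν') {p : V} {z : V ⧸ W} {t : ℝ}
    (hz : (ν' (z - W.mkQ p)).IsNear t) : ∃ p', W.mkQ p' = z ∧ (ν (p' - p)).IsNear t := by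
  obtain ⟨r, hr⟩ := W.mkQ_surjective (z - W.mkQ p)
  obtain ⟨w, hw, hnear⟩ := hν'.exists_isNear (hr ▸ hz)
  have hw0 : W.mkQ w = 0 := (Submodule.Quotient.mk_eq_zero W).mpr hw
  refine ⟨p + (r + w), ?_, by rwa [add_sub_cancel_left]⟩
  rw [LinearMap.map_add, LinearMap.map_add, hr, hw0]
  abel

theorem exists_lift_seq (hν' : IsQuotientPNorm ν W ν') {z : ℕ → V ⧸ W} {ε : ℕ → ℝ}
    (hz : ∀ k, (ν' (z (k + 1) - z k)).IsNear (ε k)) :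
    ∃ q : ℕ → V, (∀ k, W.mkQ (q k) = z k) ∧ ∀ k, (ν (q (k + 1) - q k)).IsNear (ε k) := by
  choose! lift hlift_mk hlift_near using
    fun (p : V) (k : ℕ) (h : (ν' (z (k + 1) - W.mkQ p)).IsNear (ε k)) =>
      hν'.exists_lift_isNear h
  let q : ℕ → V := fun n => Nat.rec (W.mkQ_surjective (z 0)).choose (fun k qk => lift qk k) n
  have hq_mk : ∀ k, W.mkQ (q k) = z k := by
    intro k
    induction k with
    | zero => exact (W.mkQ_surjective (z 0)).choose_spec
    | succ k ih => exact hlift_mk (q k) k (by rw [ih]; exact hz k)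
  exact ⟨q, hq_mk, fun k => hlift_near (q k) k (by rw [hq_mk]; exact hz k)⟩

theorem strongConv_mkQ (hν' : IsQuotientPNorm ν W ν') {q : ℕ → V} {x : V}
    (hq : StrongConv ν q x) : StrongConv ν' (fun n => W.mkQ (q n)) (W.mkQ x) :=
  fun t ht => (hq t ht).imp fun N hN n hn => by
    rw [← LinearMap.map_sub]
    exact IsNear.of_le (hN n hn) (hν'.le_mkQ _)

theorem strongComplete (hν' : IsQuotientPNorm ν W ν') (h : IsPPNSpace ν τ τs)
    (h' : IsPPNSpace ν' τ τs) (hcomp : StrongComplete ν) : StrongComplete ν' := by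
  intro z hz
  obtain ⟨s, hs⟩ := h.cont.exists_isTauScale h.tri
  obtain ⟨φ, hφ, hnear⟩ := hz.exists_strictMono_isNear fun k => hs.pos (k + 1)
  obtain ⟨q, hq_mk, hq_near⟩ := hν'.exists_lift_seq hnear
  obtain ⟨x, hx⟩ := hcomp q (h.strongCauchy_of_isTauScale hs hq_near)
  have hconv := hν'.strongConv_mkQ hx
  simp only [hq_mk] at hconv
  exact ⟨W.mkQ x, h'.strongConv_of_strongCauchy_of_comp hz hφ hconv⟩

end IsQuotientPNorm

theorem quotient_complete_of_complete_general {V : Type*} [AddCommGroup V] [Module ℝ V]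
    (ν : V → DistFun) (τ τs : DistFun → DistFun → DistFun)
    (h : IsPNSpace ν τ τs) (hτ : SupCont τ)
    (W : Submodule ℝ V)
    (hW : StrongClosed ν (W : Set V))
    (ν' : V ⧸ W → DistFun)
    (hν' : ∀ (p : V) (x : ℝ),
      (ν' (W.mkQ p)).toFun x = ⨆ q : W, (ν (p + (q : V))).toFun x)
    (hcomp : StrongComplete ν) :
    IsPNSpace ν' τ τs ∧ StrongComplete ν' := by
  have hquot : IsQuotientPNorm ν W ν' := hν'
  have hPN := hquot.isPNSpace h.toIsPPNSpace hτ hW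
  exact ⟨hPN, hquot.strongComplete h.toIsPPNSpace hPN.toIsPPNSpace hcomp⟩

theorem quotient_complete_of_complete {V : Type*} [AddCommGroup V] [Module ℝ V]
    (ν : V → DistFun) (τ τs : DistFun → DistFun → DistFun)
    (h : IsPNSpace ν τ τs) (hτ : SupCont τ) (hτs : SupCont τs)
    (W : Submodule ℝ V)
    (hW : StrongClosed ν (W : Set V))
    (ν' : V ⧸ W → DistFun)
    (hν' : ∀ (p : V) (x : ℝ),
      (ν' (W.mkQ p)).toFun x = ⨆ q : W, (ν (p + (q : V))).toFun x)
    (hcomp : StrongComplete ν) :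
    IsPNSpace ν' τ τs ∧ StrongComplete ν' :=
  quotient_complete_of_complete_general ν τ τs h hτ W hW ν' hν' hcomp
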